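/- The optimal value function V*(t, x) := ⨆_{π} V_π(t, x) (supremum over all Markov strategies π : ℕ → S → A) satisfies the Bellman equation: for every t ≤ T and every state x ∈ S, V*(t, x) = max_{a ∈ A} ( g(t, x, a) + ∑_{z ∈ Z} ζ_t z · V*(t + 1, f(t, x, a, z)) ), with boundary condition V*(T + 1, x) = 0; equivalently, V*(t, x) = W(t, x) for all t ≤ T + 1 and all x. -/
import Mathlib


/-- Finite-horizon stochastic control: the optimal value function
`V* t x = ⨆ π, V π t x` (supremum over all Markov strategies) satisfies the Bellman
equation `V* t x = max_{a} (g t x a + ∑ z, ζ t z * V* (t+1) (f t x a z))` for `t ≤ T`,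
with boundary condition `V* (T+1) x = 0`; equivalently, `V* t x = W t x` for all
`t ≤ T + 1` and all `x`, where `W` is the Bellman backward-induction value. -/
theorem optimal_value_satisfies_bellman_equation
    {S A Z : Type*} [Nonempty S] [Nonempty A] [Fintype A] [Nonempty Z] [Fintype Z]
    (ζ : ℕ → Z → ℝ)
    (hζ_nonneg : ∀ t z, 0 ≤ ζ t z)
    (hζ_sum : ∀ t, ∑ z : Z, ζ t z = 1)
    (f : ℕ → S → A → Z → S) (g : ℕ → S → A → ℝ) (T : ℕ)
    (V : (ℕ → S → A) → ℕ → S → ℝ)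
    (hV_top : ∀ (π : ℕ → S → A) (x : S), V π (T + 1) x = 0)
    (hV_rec : ∀ (π : ℕ → S → A) (t : ℕ) (x : S), t ≤ T →
      V π t x = g t x (π t x) + ∑ z : Z, ζ t z * V π (t + 1) (f t x (π t x) z))
    (W : ℕ → S → ℝ)
    (hW_top : ∀ x : S, W (T + 1) x = 0)
    (hW_rec : ∀ (t : ℕ) (x : S), t ≤ T →
      W t x = Finset.univ.sup' Finset.univ_nonempty
        (fun a : A => g t x a + ∑ z : Z, ζ t z * W (t + 1) (f t x a z)))
    (Vstar : ℕ → S → ℝ)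
    (hVstar : ∀ (t : ℕ) (x : S), Vstar t x = ⨆ π : ℕ → S → A, V π t x) :
    (∀ x : S, Vstar (T + 1) x = 0) ∧
    (∀ (t : ℕ) (x : S), t ≤ T →
      Vstar t x = Finset.univ.sup' Finset.univ_nonempty
        (fun a : A => g t x a + ∑ z : Z, ζ t z * Vstar (t + 1) (f t x a z))) ∧
    (∀ (t : ℕ) (x : S), t ≤ T + 1 → Vstar t x = W t x) := by
  classical
  -- an optimal strategy
  set πopt : ℕ → S → A := fun t x =>
    if ht : t ≤ T then
      Classical.choose (Finset.exists_mem_eq_sup' (Finset.univ_nonempty (α := A))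
        (fun a : A => g t x a + ∑ z : Z, ζ t z * W (t + 1) (f t x a z)))
    else Classical.arbitrary A with hπopt
  have hπopt_spec : ∀ t x, t ≤ T →
      W t x = g t x (πopt t x) + ∑ z : Z, ζ t z * W (t + 1) (f t x (πopt t x) z) := by
    intro t x ht
    have := (Classical.choose_spec (Finset.exists_mem_eq_sup'
      (Finset.univ_nonempty (α := A))
      (fun a : A => g t x a + ∑ z : Z, ζ t z * W (t + 1) (f t x a z)))).2
    simp only [hπopt, dif_pos ht]
    rw [hW_rec t x ht]; exact this
  -- key backward induction
  have key : ∀ k t, T + 1 = t + k → ∀ x,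
      (∀ π : ℕ → S → A, V π t x ≤ W t x) ∧ V πopt t x = W t x := by
    intro k
    induction k with
    | zero =>
      intro t ht x
      simp only [Nat.add_zero] at ht
      subst ht
      exact ⟨fun π => by rw [hV_top, hW_top], by rw [hV_top, hW_top]⟩
    | succ k ih =>
      intro t ht x
      have htT : t ≤ T := by omega
      have ht1 : T + 1 = (t + 1) + k := by omega
      constructor
      · intro π
        rw [hV_rec π t x htT, hW_rec t x htT]
        refine le_trans ?_ (Finset.le_sup' _ (Finset.mem_univ (π t x)))
        refine add_le_add le_rfl (Finset.sum_le_sum fun z _ => ?_)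
        exact mul_le_mul_of_nonneg_left ((ih (t + 1) ht1 _).1 π) (hζ_nonneg t z)
      · rw [hV_rec πopt t x htT, hπopt_spec t x htT]
        congr 1
        exact Finset.sum_congr rfl fun z _ => by rw [(ih (t + 1) ht1 _).2]
  have hVW : ∀ t x, t ≤ T + 1 → Vstar t x = W t x := by
    intro t x ht
    obtain ⟨hub, hopt⟩ := key (T + 1 - t) t (by omega) x
    rw [hVstar]
    have hbdd : BddAbove (Set.range fun π : ℕ → S → A => V π t x) :=
      ⟨W t x, by rintro _ ⟨π, rfl⟩; exact hub π⟩
    refine le_antisymm (ciSup_le hub) ?_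
    calc W t x = V πopt t x := hopt.symm
      _ ≤ ⨆ π : ℕ → S → A, V π t x := le_ciSup hbdd πopt
  refine ⟨fun x => by rw [hVW _ _ le_rfl, hW_top], fun t x ht => ?_, hVW⟩
  rw [hVW t x (by omega), hW_rec t x ht]
  refine Finset.sup'_congr _ rfl fun a _ => ?_
  congr 1
  exact Finset.sum_congr rfl fun z _ => by rw [hVW (t + 1) _ (by omega)]
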